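/- Let n ≥ 1, z, u ∈ ℂ^n, and for p, q ∈ ℕ define the polynomial function f_{p,q}(s,t) = ⟨z, conj(t+s)⟩^p·⟨z̄, t−s⟩^q·⟨u, conj(t−s)⟩^q·⟨ū, t+s⟩^p/(p!·q!·q!·p!) of (s,t) ∈ ℂ^n × ℂ^n ≅ ℝ^{2n} × ℝ^{2n}, where ⟨a, b⟩ = ∑_{j=1}^n a_j b_j, ⟨z̄, w⟩ = ∑_j conj(z_j)·w_j and ⟨z, conj(w)⟩ = ∑_j z_j·conj(w_j). Then for all p, q ≥ 1: I₁ f_{p,q} = 8·(⟨z,ū⟩·f_{p−1,q} + ⟨z̄,u⟩·f_{p,q−1}) and I₂ f_{p,q} = 64·(|⟨z,ū⟩|² − ‖z‖²‖u‖²)·f_{p−1,q−1}, where ⟨z,ū⟩ = ∑_j z_j·conj(u_j), ⟨z̄,u⟩ = conj(⟨z,ū⟩) and ‖z‖² = ∑_j |z_j|². -/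

import Mathlib

/-!
`f_{p,q}` is `g ∘ ℓ` for the divided monomial `g = X₀^p X₁^q X₂^q X₃^p / (p! q! q! p!)` and four
complex-linear forms `ℓ`, whose partial derivatives are constants. By the chain rule every
constant-coefficient operator `D` in the real variables then satisfies `D (g ∘ ℓ) = (P_D(∂) g) ∘ ℓ`
for a polynomial symbol `P_D` in four variables, with `P_{D ∘ D'} = P_D P_{D'}`. Writing the
operators in Wirtinger form, `Δ_v = 4 ∑ ∂_{s_j} ∂_{s̄_j}`, `Δ_w = 4 ∑ ∂_{t_j} ∂_{t̄_j}`,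
`⟨∇_w, ∇_v⟩ = 2 ∑ (∂_{s_j} ∂_{t̄_j} + ∂_{s̄_j} ∂_{t_j})` and
`⟨∇_w, J∇_v⟩ = 2i ∑ (∂_{s_j} ∂_{t̄_j} - ∂_{s̄_j} ∂_{t_j})`, the symbols of `I₁` and `I₂` for these
forms are `8 (⟨z,ū⟩ X₀X₃ + ⟨z̄,u⟩ X₁X₂)` and `64 (|⟨z,ū⟩|² - ‖z‖²‖u‖²) X₀X₁X₂X₃`: in `I₂` the
squares of `X₀X₁`, `X₂X₃`, `X₀X₃`, `X₁X₂` cancel. Each `∂ᵢ` lowers the `i`-th exponent of `g`.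
-/

open MvPolynomial

noncomputable section

/-- The inclusion `Fin n → Fin (2n)`, `j ↦ j`. -/
def il (n : ℕ) (j : Fin n) : Fin (2 * n) := ⟨j.1, by have := j.2; omega⟩

/-- The inclusion `Fin n → Fin (2n)`, `j ↦ n + j`. -/
def ir (n : ℕ) (j : Fin n) : Fin (2 * n) := ⟨n + j.1, by have := j.2; omega⟩

/-- The identification `ℂ^n ≅ ℝ^{2n}`, `z = a + ib ↦ (a, b)`. -/
def reIm (n : ℕ) (c : Fin n → ℂ) : Fin (2 * n) → ℝ :=
  fun i => if h : i.1 < n then (c ⟨i.1, h⟩).re else (c ⟨i.1 - n, by have := i.2; omega⟩).im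

/-- `I₁ = Δ_v + Δ_w` on polynomials in the real variables `(v,w) ∈ ℝ^{2n} × ℝ^{2n}`
(`Sum.inl i = v_i`, `Sum.inr i = w_i`). -/
def I1op (n : ℕ) (F : MvPolynomial (Fin (2 * n) ⊕ Fin (2 * n)) ℂ) :
    MvPolynomial (Fin (2 * n) ⊕ Fin (2 * n)) ℂ :=
  ∑ i : Fin (2 * n),
    (pderiv (Sum.inl i) (pderiv (Sum.inl i) F) + pderiv (Sum.inr i) (pderiv (Sum.inr i) F))

/-- The Laplacian in the `v`-variables. -/
def lapV (n : ℕ) (F : MvPolynomial (Fin (2 * n) ⊕ Fin (2 * n)) ℂ) :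
    MvPolynomial (Fin (2 * n) ⊕ Fin (2 * n)) ℂ :=
  ∑ i : Fin (2 * n), pderiv (Sum.inl i) (pderiv (Sum.inl i) F)

/-- The Laplacian in the `w`-variables. -/
def lapW (n : ℕ) (F : MvPolynomial (Fin (2 * n) ⊕ Fin (2 * n)) ℂ) :
    MvPolynomial (Fin (2 * n) ⊕ Fin (2 * n)) ℂ :=
  ∑ i : Fin (2 * n), pderiv (Sum.inr i) (pderiv (Sum.inr i) F)

/-- The mixed operator `⟨∇_w,∇_v⟩ = ∑_i ∂_{w_i} ∂_{v_i}`. -/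
def mixedOp (n : ℕ) (F : MvPolynomial (Fin (2 * n) ⊕ Fin (2 * n)) ℂ) :
    MvPolynomial (Fin (2 * n) ⊕ Fin (2 * n)) ℂ :=
  ∑ i : Fin (2 * n), pderiv (Sum.inr i) (pderiv (Sum.inl i) F)

/-- The twisted mixed operator `⟨∇_w, J ∇_v⟩ = ∑_{j<n} (∂_{w_j} ∂_{v_{n+j}} − ∂_{w_{n+j}} ∂_{v_j})`,
with `J = [[0, I_n], [−I_n, 0]]`. -/
def mixedJOp (n : ℕ) (F : MvPolynomial (Fin (2 * n) ⊕ Fin (2 * n)) ℂ) :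
    MvPolynomial (Fin (2 * n) ⊕ Fin (2 * n)) ℂ :=
  ∑ j : Fin n,
    (pderiv (Sum.inr (il n j)) (pderiv (Sum.inl (ir n j)) F)
      - pderiv (Sum.inr (ir n j)) (pderiv (Sum.inl (il n j)) F))

/-- `I₂ = Δ_w Δ_v − ⟨∇_w,∇_v⟩² − ⟨∇_w, J∇_v⟩²`. -/
def I2op (n : ℕ) (F : MvPolynomial (Fin (2 * n) ⊕ Fin (2 * n)) ℂ) :
    MvPolynomial (Fin (2 * n) ⊕ Fin (2 * n)) ℂ :=
  lapW n (lapV n F) - mixedOp n (mixedOp n F) - mixedJOp n (mixedJOp n F)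

/-- The complex coordinate `s_j = v_j + i v_{n+j}` as a polynomial in the real variables. -/
def sVar (n : ℕ) (j : Fin n) : MvPolynomial (Fin (2 * n) ⊕ Fin (2 * n)) ℂ :=
  X (Sum.inl (il n j)) + C Complex.I * X (Sum.inl (ir n j))

/-- The complex coordinate `t_j = w_j + i w_{n+j}` as a polynomial in the real variables. -/
def tVar (n : ℕ) (j : Fin n) : MvPolynomial (Fin (2 * n) ⊕ Fin (2 * n)) ℂ :=
  X (Sum.inr (il n j)) + C Complex.I * X (Sum.inr (ir n j))

/-- `conj s_j = v_j − i v_{n+j}`. -/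
def sVarBar (n : ℕ) (j : Fin n) : MvPolynomial (Fin (2 * n) ⊕ Fin (2 * n)) ℂ :=
  X (Sum.inl (il n j)) - C Complex.I * X (Sum.inl (ir n j))

/-- `conj t_j = w_j − i w_{n+j}`. -/
def tVarBar (n : ℕ) (j : Fin n) : MvPolynomial (Fin (2 * n) ⊕ Fin (2 * n)) ℂ :=
  X (Sum.inr (il n j)) - C Complex.I * X (Sum.inr (ir n j))

/-- The plane wave polynomial
`f_{p,q}(s,t) = ⟨z,conj(t+s)⟩^p ⟨z̄,t−s⟩^q ⟨u,conj(t−s)⟩^q ⟨ū,t+s⟩^p / (p! q! q! p!)`. -/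
def fpq (n : ℕ) (z u : Fin n → ℂ) (p q : ℕ) : MvPolynomial (Fin (2 * n) ⊕ Fin (2 * n)) ℂ :=
  C (((p.factorial : ℂ) * (q.factorial : ℂ) * (q.factorial : ℂ) * (p.factorial : ℂ))⁻¹) *
    (∑ j : Fin n, C (z j) * (tVarBar n j + sVarBar n j)) ^ p *
    (∑ j : Fin n, C ((starRingEnd ℂ) (z j)) * (tVar n j - sVar n j)) ^ q *
    (∑ j : Fin n, C (u j) * (tVarBar n j - sVarBar n j)) ^ q *
    (∑ j : Fin n, C ((starRingEnd ℂ) (u j)) * (tVar n j + sVar n j)) ^ p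


namespace MvPolynomial

variable {R σ ι : Type*} [CommRing R]

theorem pderiv_pderiv_comm (i j : σ) (f : MvPolynomial σ R) :
    pderiv i (pderiv j f) = pderiv j (pderiv i f) := by
  classical
  have h : ⁅pderiv i, pderiv j⁆ = (0 : Derivation R (MvPolynomial σ R) (MvPolynomial σ R)) :=
    derivation_ext fun k => by
      rw [Derivation.commutator_apply]; simp [pderiv_X, Pi.single_apply, apply_ite]
  simpa [Derivation.commutator_apply, sub_eq_zero] using congr($h f)

open scoped IsMulCommutative in
variable (R σ) in
/-- The constant-coefficient differential operator `P(∂)`, evaluated in the commutative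
subalgebra generated by the partial derivatives. -/
def diffOp : MvPolynomial σ R →ₐ[R] Module.End R (MvPolynomial σ R) :=
  let s : Set (Module.End R (MvPolynomial σ R)) := Set.range fun i => (pderiv i).toLinearMap
  haveI := Algebra.isMulCommutative_adjoin R (s := s)
    (by rintro _ ⟨i, rfl⟩ _ ⟨j, rfl⟩; exact LinearMap.ext fun f => pderiv_pderiv_comm i j f)
  (Algebra.adjoin R s).val.comp
    (aeval fun i => ⟨(pderiv i).toLinearMap, Algebra.subset_adjoin ⟨i, rfl⟩⟩)

@[simp]
theorem diffOp_X (i : σ) : diffOp R σ (X i) = (pderiv i).toLinearMap := by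
  simp [diffOp]

theorem diffOp_linearCombination_apply [Fintype σ] (c : σ → R) (g : MvPolynomial σ R) :
    diffOp R σ (Fintype.linearCombination R X c) g = ∑ a, c a • pderiv a g := by
  simp [Fintype.linearCombination_apply, LinearMap.sum_apply]

theorem diffOp_C_mul_apply (c : R) (P g : MvPolynomial σ R) :
    diffOp R σ (C c * P) g = c • diffOp R σ P g := by
  rw [map_mul, algHom_C, Module.End.mul_apply, Module.algebraMap_end_apply]

theorem pderiv_aeval_of_pderiv_eq_C [Fintype ι] [DecidableEq ι] (ℓ : ι → MvPolynomial σ R)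
    (x : σ) (c : ι → R) (hℓ : ∀ a, pderiv x (ℓ a) = C (c a)) (g : MvPolynomial ι R) :
    pderiv x (aeval ℓ g) = aeval ℓ (diffOp R ι (Fintype.linearCombination R X c) g) := by
  rw [diffOp_linearCombination_apply]
  induction g using MvPolynomial.induction_on with
  | C r => simp
  | add p q hp hq => simp only [map_add, hp, hq, Finset.sum_add_distrib, smul_add]
  | mul_X p i hp =>
    simp only [map_mul, aeval_X, Derivation.leibniz, hℓ, hp, pderiv_X, smul_add,
      Finset.sum_add_distrib, map_sum, map_smul, smul_eq_mul, Pi.single_apply]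
    simp [Finset.mul_sum, Algebra.smul_def, mul_left_comm, mul_comm]

theorem linearCombination_X_fin_four (a b c d : R) :
    Fintype.linearCombination R X ![a, b, c, d] =
      (C a * X 0 + C b * X 1 + C c * X 2 + C d * X 3 : MvPolynomial (Fin 4) R) := by
  simp [Fintype.linearCombination_apply, Fin.sum_univ_four, smul_eq_C_mul]

def dividedPow {K : Type*} [Field K] (i : σ) (k : ℕ) : MvPolynomial σ K :=
  C (k.factorial : K)⁻¹ * X i ^ k

theorem pderiv_dividedPow_succ {K : Type*} [Field K] [CharZero K] (i : σ) (k : ℕ) :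
    pderiv i (dividedPow i (k + 1) : MvPolynomial σ K) = dividedPow i k := by
  have hk : ((k + 1 : ℕ) : K) ≠ 0 := Nat.cast_ne_zero.2 k.succ_ne_zero
  simp only [dividedPow, pderiv_C_mul, pderiv_pow, pderiv_X_self, mul_one, Nat.add_sub_cancel,
    Nat.factorial_succ, Nat.cast_mul, mul_inv, ← C_eq_coe_nat]
  rw [← mul_assoc, ← map_mul, mul_right_comm, inv_mul_cancel₀ hk, one_mul]

theorem pderiv_dividedPow_of_ne {K : Type*} [Field K] {i j : σ} (h : i ≠ j) (k : ℕ) :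
    pderiv j (dividedPow i k : MvPolynomial σ K) = 0 := by
  simp [dividedPow, pderiv_X_of_ne h]

end MvPolynomial

-- Pulled back along forms `ℓ` with constant `∂ₓ (ℓ a) = c a`, the derivative `∂ₓ` becomes
-- `diffOp (𝔡 c)`; `𝔡 (α j)` and `𝔡 (β j)` are the symbols of `∂/∂s_j` and `∂/∂s̄_j`.
local notation "𝔡" c:max => Fintype.linearCombination ℂ X c

section ComplexCoordinates

variable {n : ℕ} {ι : Type*} [Fintype ι] [DecidableEq ι]

theorem sum_fin_two_mul {M : Type*} [AddCommMonoid M] (f : Fin (2 * n) → M) :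
    ∑ i, f i = ∑ j : Fin n, (f (il n j) + f (ir n j)) := by
  rw [← Fin.sum_congr' f (two_mul n).symm, Fin.sum_univ_add, Finset.sum_add_distrib]
  rfl

@[simp] theorem il_inj {j k : Fin n} : il n j = il n k ↔ j = k := by simp [il, Fin.ext_iff]

@[simp] theorem ir_inj {j k : Fin n} : ir n j = ir n k ↔ j = k := by simp [ir, Fin.ext_iff]

@[simp] theorem il_ne_ir {j k : Fin n} : il n j ≠ ir n k := by
  simp only [il, ir, ne_eq, Fin.ext_iff]; omega

def linForms (n : ℕ) (α β γ δ : Fin n → ι → ℂ) (a : ι) :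
    MvPolynomial (Fin (2 * n) ⊕ Fin (2 * n)) ℂ :=
  ∑ j, (C (α j a) * sVar n j + C (β j a) * sVarBar n j + C (γ j a) * tVar n j
    + C (δ j a) * tVarBar n j)

variable (α β γ δ : Fin n → ι → ℂ)

local notation "ℓ" => linForms n α β γ δ

theorem pderiv_inl_il_aeval_linForms (j : Fin n) (g : MvPolynomial ι ℂ) :
    pderiv (Sum.inl (il n j)) (aeval ℓ g) = aeval ℓ (diffOp ℂ ι (𝔡 (α j) + 𝔡 (β j)) g) := by
  rw [← map_add, pderiv_aeval_of_pderiv_eq_C _ _ (α j + β j) fun a => by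
    simp [linForms, sVar, sVarBar, tVar, tVarBar, pderiv_X, Pi.single_apply,
      Finset.sum_add_distrib]]

theorem pderiv_inl_ir_aeval_linForms (j : Fin n) (g : MvPolynomial ι ℂ) :
    pderiv (Sum.inl (ir n j)) (aeval ℓ g) =
      aeval ℓ (diffOp ℂ ι (C Complex.I * (𝔡 (α j) - 𝔡 (β j))) g) := by
  rw [← map_sub, ← smul_eq_C_mul, ← map_smul,
    pderiv_aeval_of_pderiv_eq_C _ _ (Complex.I • (α j - β j)) fun a => by
      simp [linForms, sVar, sVarBar, tVar, tVarBar, pderiv_X, Pi.single_apply,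
        Finset.sum_add_distrib]
      ring]

theorem pderiv_inr_il_aeval_linForms (j : Fin n) (g : MvPolynomial ι ℂ) :
    pderiv (Sum.inr (il n j)) (aeval ℓ g) = aeval ℓ (diffOp ℂ ι (𝔡 (γ j) + 𝔡 (δ j)) g) := by
  rw [← map_add, pderiv_aeval_of_pderiv_eq_C _ _ (γ j + δ j) fun a => by
    simp [linForms, sVar, sVarBar, tVar, tVarBar, pderiv_X, Pi.single_apply,
      Finset.sum_add_distrib]]

theorem pderiv_inr_ir_aeval_linForms (j : Fin n) (g : MvPolynomial ι ℂ) :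
    pderiv (Sum.inr (ir n j)) (aeval ℓ g) =
      aeval ℓ (diffOp ℂ ι (C Complex.I * (𝔡 (γ j) - 𝔡 (δ j))) g) := by
  rw [← map_sub, ← smul_eq_C_mul, ← map_smul,
    pderiv_aeval_of_pderiv_eq_C _ _ (Complex.I • (γ j - δ j)) fun a => by
      simp [linForms, sVar, sVarBar, tVar, tVarBar, pderiv_X, Pi.single_apply,
        Finset.sum_add_distrib]
      ring]

theorem C_I_sq {σ : Type*} : (C Complex.I : MvPolynomial σ ℂ) ^ 2 = -1 := by
  rw [← map_pow, Complex.I_sq, map_neg, map_one]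

theorem lapV_aeval_linForms (g : MvPolynomial ι ℂ) :
    lapV n (aeval ℓ g) = aeval ℓ (diffOp ℂ ι (4 * ∑ j, 𝔡 (α j) * 𝔡 (β j)) g) := by
  have hsymb : 4 * ∑ j, 𝔡 (α j) * 𝔡 (β j) =
      ∑ j, ((𝔡 (α j) + 𝔡 (β j)) * (𝔡 (α j) + 𝔡 (β j)) +
        (C Complex.I * (𝔡 (α j) - 𝔡 (β j))) * (C Complex.I * (𝔡 (α j) - 𝔡 (β j)))) := by
    rw [Finset.mul_sum]
    refine Finset.sum_congr rfl fun j _ => ?_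
    linear_combination (-(𝔡 (α j) - 𝔡 (β j)) ^ 2) * C_I_sq
  rw [lapV, sum_fin_two_mul, hsymb]
  simp only [pderiv_inl_il_aeval_linForms, pderiv_inl_ir_aeval_linForms, map_sum, map_add,
    map_mul, LinearMap.sum_apply, LinearMap.add_apply, Module.End.mul_apply]

theorem lapW_aeval_linForms (g : MvPolynomial ι ℂ) :
    lapW n (aeval ℓ g) = aeval ℓ (diffOp ℂ ι (4 * ∑ j, 𝔡 (γ j) * 𝔡 (δ j)) g) := by
  have hsymb : 4 * ∑ j, 𝔡 (γ j) * 𝔡 (δ j) =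
      ∑ j, ((𝔡 (γ j) + 𝔡 (δ j)) * (𝔡 (γ j) + 𝔡 (δ j)) +
        (C Complex.I * (𝔡 (γ j) - 𝔡 (δ j))) * (C Complex.I * (𝔡 (γ j) - 𝔡 (δ j)))) := by
    rw [Finset.mul_sum]
    refine Finset.sum_congr rfl fun j _ => ?_
    linear_combination (-(𝔡 (γ j) - 𝔡 (δ j)) ^ 2) * C_I_sq
  rw [lapW, sum_fin_two_mul, hsymb]
  simp only [pderiv_inr_il_aeval_linForms, pderiv_inr_ir_aeval_linForms, map_sum, map_add,
    map_mul, LinearMap.sum_apply, LinearMap.add_apply, Module.End.mul_apply]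

theorem mixedOp_aeval_linForms (g : MvPolynomial ι ℂ) :
    mixedOp n (aeval ℓ g) =
      aeval ℓ (diffOp ℂ ι (2 * ∑ j, (𝔡 (α j) * 𝔡 (δ j) + 𝔡 (β j) * 𝔡 (γ j))) g) := by
  have hsymb : 2 * ∑ j, (𝔡 (α j) * 𝔡 (δ j) + 𝔡 (β j) * 𝔡 (γ j)) =
      ∑ j, ((𝔡 (γ j) + 𝔡 (δ j)) * (𝔡 (α j) + 𝔡 (β j)) +
        (C Complex.I * (𝔡 (γ j) - 𝔡 (δ j))) * (C Complex.I * (𝔡 (α j) - 𝔡 (β j)))) := by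
    rw [Finset.mul_sum]
    refine Finset.sum_congr rfl fun j _ => ?_
    linear_combination (-(𝔡 (γ j) - 𝔡 (δ j)) * (𝔡 (α j) - 𝔡 (β j))) * C_I_sq
  rw [mixedOp, sum_fin_two_mul, hsymb]
  simp only [pderiv_inl_il_aeval_linForms, pderiv_inl_ir_aeval_linForms,
    pderiv_inr_il_aeval_linForms, pderiv_inr_ir_aeval_linForms, map_sum, map_add, map_mul,
    LinearMap.sum_apply, LinearMap.add_apply, Module.End.mul_apply]

theorem mixedJOp_aeval_linForms (g : MvPolynomial ι ℂ) :
    mixedJOp n (aeval ℓ g) = aeval ℓ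
      (diffOp ℂ ι (2 * C Complex.I * ∑ j, (𝔡 (α j) * 𝔡 (δ j) - 𝔡 (β j) * 𝔡 (γ j))) g) := by
  have hsymb : 2 * C Complex.I * ∑ j, (𝔡 (α j) * 𝔡 (δ j) - 𝔡 (β j) * 𝔡 (γ j)) =
      ∑ j, ((𝔡 (γ j) + 𝔡 (δ j)) * (C Complex.I * (𝔡 (α j) - 𝔡 (β j))) -
        (C Complex.I * (𝔡 (γ j) - 𝔡 (δ j))) * (𝔡 (α j) + 𝔡 (β j))) := by
    rw [Finset.mul_sum]
    exact Finset.sum_congr rfl fun j _ => by ring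
  rw [mixedJOp, hsymb]
  simp only [pderiv_inl_il_aeval_linForms, pderiv_inl_ir_aeval_linForms,
    pderiv_inr_il_aeval_linForms, pderiv_inr_ir_aeval_linForms, map_sum, map_sub, map_mul,
    LinearMap.sum_apply, LinearMap.sub_apply, Module.End.mul_apply]

theorem I1op_aeval_linForms (g : MvPolynomial ι ℂ) :
    I1op n (aeval ℓ g) = aeval ℓ
      (diffOp ℂ ι (4 * ∑ j, (𝔡 (α j) * 𝔡 (β j) + 𝔡 (γ j) * 𝔡 (δ j))) g) := by
  rw [I1op, Finset.sum_add_distrib, ← lapV, ← lapW, lapV_aeval_linForms, lapW_aeval_linForms,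
    Finset.sum_add_distrib, mul_add, map_add, LinearMap.add_apply, map_add]

theorem I2op_aeval_linForms (g : MvPolynomial ι ℂ) :
    I2op n (aeval ℓ g) = aeval ℓ (diffOp ℂ ι
      ((4 * ∑ j, 𝔡 (γ j) * 𝔡 (δ j)) * (4 * ∑ j, 𝔡 (α j) * 𝔡 (β j))
        - (2 * ∑ j, (𝔡 (α j) * 𝔡 (δ j) + 𝔡 (β j) * 𝔡 (γ j))) ^ 2
        - (2 * C Complex.I * ∑ j, (𝔡 (α j) * 𝔡 (δ j) - 𝔡 (β j) * 𝔡 (γ j))) ^ 2) g) := by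
  rw [I2op, lapV_aeval_linForms, lapW_aeval_linForms, mixedOp_aeval_linForms,
    mixedOp_aeval_linForms, mixedJOp_aeval_linForms, mixedJOp_aeval_linForms]
  simp only [sq, map_sub, map_mul, LinearMap.sub_apply, Module.End.mul_apply]

end ComplexCoordinates

section PlaneWave

variable (n : ℕ) (z u : Fin n → ℂ)

/-- The forms `⟨z, conj (t + s)⟩`, `⟨z̄, t - s⟩`, `⟨u, conj (t - s)⟩`, `⟨ū, t + s⟩`. -/
def planeWaveForms : Fin 4 → MvPolynomial (Fin (2 * n) ⊕ Fin (2 * n)) ℂ :=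
  linForms n (fun j => ![0, -(starRingEnd ℂ) (z j), 0, (starRingEnd ℂ) (u j)])
    (fun j => ![z j, 0, -u j, 0]) (fun j => ![0, (starRingEnd ℂ) (z j), 0, (starRingEnd ℂ) (u j)])
    (fun j => ![z j, 0, u j, 0])

def planeWaveMonomial (p q : ℕ) : MvPolynomial (Fin 4) ℂ :=
  dividedPow 0 p * dividedPow 1 q * dividedPow 2 q * dividedPow 3 p

theorem diffOp_X_zero_mul_X_three_planeWaveMonomial (p q : ℕ) :
    diffOp ℂ (Fin 4) (X 0 * X 3) (planeWaveMonomial (p + 1) q) = planeWaveMonomial p q := by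
  simp [planeWaveMonomial, Module.End.mul_apply, pderiv_dividedPow_succ, pderiv_dividedPow_of_ne]
  ring

theorem diffOp_X_one_mul_X_two_planeWaveMonomial (p q : ℕ) :
    diffOp ℂ (Fin 4) (X 1 * X 2) (planeWaveMonomial p (q + 1)) = planeWaveMonomial p q := by
  simp [planeWaveMonomial, Module.End.mul_apply, pderiv_dividedPow_succ, pderiv_dividedPow_of_ne]
  ring

theorem diffOp_X_mul_X_mul_X_mul_X_planeWaveMonomial (p q : ℕ) :
    diffOp ℂ (Fin 4) (X 0 * X 1 * X 2 * X 3) (planeWaveMonomial (p + 1) (q + 1)) =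
      planeWaveMonomial p q := by
  simp [planeWaveMonomial, Module.End.mul_apply, pderiv_dividedPow_succ, pderiv_dividedPow_of_ne]
  ring

theorem fpq_eq_aeval_planeWaveMonomial (p q : ℕ) :
    fpq n z u p q = aeval (planeWaveForms n z u) (planeWaveMonomial p q) := by
  have h0 : planeWaveForms n z u 0 = ∑ j, C (z j) * (tVarBar n j + sVarBar n j) := by
    rw [planeWaveForms, linForms]; exact Finset.sum_congr rfl fun j _ => by simp; ring
  have h1 : planeWaveForms n z u 1 = ∑ j, C ((starRingEnd ℂ) (z j)) * (tVar n j - sVar n j) := by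
    rw [planeWaveForms, linForms]; exact Finset.sum_congr rfl fun j _ => by simp; ring
  have h2 : planeWaveForms n z u 2 = ∑ j, C (u j) * (tVarBar n j - sVarBar n j) := by
    rw [planeWaveForms, linForms]; exact Finset.sum_congr rfl fun j _ => by simp; ring
  have h3 : planeWaveForms n z u 3 = ∑ j, C ((starRingEnd ℂ) (u j)) * (tVar n j + sVar n j) := by
    rw [planeWaveForms, linForms]; exact Finset.sum_congr rfl fun j _ => by simp; ring
  simp only [fpq, planeWaveMonomial, dividedPow, map_mul, map_pow, aeval_C, aeval_X,
    algebraMap_eq, h0, h1, h2, h3, mul_inv]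
  ring

local notation "ζ" => ∑ j : Fin n, z j * (starRingEnd ℂ) (u j)

theorem sum_symbols_planeWaveForms :
    (∑ j, 𝔡 ![0, -(starRingEnd ℂ) (z j), 0, (starRingEnd ℂ) (u j)] * 𝔡 ![z j, 0, -u j, 0] =
      C ζ * (X 0 * X 3) + C ((starRingEnd ℂ) ζ) * (X 1 * X 2)
        - C (∑ j, z j * (starRingEnd ℂ) (z j)) * (X 0 * X 1)
        - C (∑ j, u j * (starRingEnd ℂ) (u j)) * (X 2 * X 3)) ∧
    (∑ j, 𝔡 ![0, (starRingEnd ℂ) (z j), 0, (starRingEnd ℂ) (u j)] * 𝔡 ![z j, 0, u j, 0] =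
      C ζ * (X 0 * X 3) + C ((starRingEnd ℂ) ζ) * (X 1 * X 2)
        + C (∑ j, z j * (starRingEnd ℂ) (z j)) * (X 0 * X 1)
        + C (∑ j, u j * (starRingEnd ℂ) (u j)) * (X 2 * X 3)) ∧
    (∑ j, (𝔡 ![0, -(starRingEnd ℂ) (z j), 0, (starRingEnd ℂ) (u j)] * 𝔡 ![z j, 0, u j, 0]
        + 𝔡 ![z j, 0, -u j, 0] * 𝔡 ![0, (starRingEnd ℂ) (z j), 0, (starRingEnd ℂ) (u j)]) =
      2 * (C ζ * (X 0 * X 3) - C ((starRingEnd ℂ) ζ) * (X 1 * X 2))) ∧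
    (∑ j, (𝔡 ![0, -(starRingEnd ℂ) (z j), 0, (starRingEnd ℂ) (u j)] * 𝔡 ![z j, 0, u j, 0]
        - 𝔡 ![z j, 0, -u j, 0] * 𝔡 ![0, (starRingEnd ℂ) (z j), 0, (starRingEnd ℂ) (u j)]) =
      2 * (C (∑ j, u j * (starRingEnd ℂ) (u j)) * (X 2 * X 3)
        - C (∑ j, z j * (starRingEnd ℂ) (z j)) * (X 0 * X 1))) := by
  simp only [linearCombination_X_fin_four, map_sum, map_mul, starRingEnd_self_apply,
    Finset.sum_mul, Finset.mul_sum, ← Finset.sum_add_distrib, ← Finset.sum_sub_distrib]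
  refine ⟨?_, ?_, ?_, ?_⟩ <;>
    exact Finset.sum_congr rfl fun j _ => by simp only [map_neg, map_zero]; ring

theorem I1op_aeval_planeWaveForms (g : MvPolynomial (Fin 4) ℂ) :
    I1op n (aeval (planeWaveForms n z u) g) = aeval (planeWaveForms n z u) (diffOp ℂ (Fin 4)
      (C 8 * (C ζ * (X 0 * X 3) + C ((starRingEnd ℂ) ζ) * (X 1 * X 2))) g) := by
  obtain ⟨hv, hw, -, -⟩ := sum_symbols_planeWaveForms n z u
  rw [planeWaveForms, I1op_aeval_linForms, Finset.sum_add_distrib, hv, hw, map_ofNat]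
  ring_nf

theorem I2op_aeval_planeWaveForms (g : MvPolynomial (Fin 4) ℂ) :
    I2op n (aeval (planeWaveForms n z u) g) = aeval (planeWaveForms n z u) (diffOp ℂ (Fin 4)
      (C (64 * (ζ * (starRingEnd ℂ) ζ - (∑ j, z j * (starRingEnd ℂ) (z j)) *
        (∑ j, u j * (starRingEnd ℂ) (u j)))) * (X 0 * X 1 * X 2 * X 3)) g) := by
  obtain ⟨hv, hw, hm, hj⟩ := sum_symbols_planeWaveForms n z u
  rw [planeWaveForms, I2op_aeval_linForms, hv, hw, hm, hj]
  congr 3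
  simp only [map_mul, map_sub, map_ofNat]
  linear_combination (-16 * (C (∑ j, u j * (starRingEnd ℂ) (u j)) * (X 2 * X 3)
        - C (∑ j, z j * (starRingEnd ℂ) (z j)) * (X 0 * X 1)) ^ 2 : MvPolynomial (Fin 4) ℂ) * C_I_sq

end PlaneWave

theorem statement17_general (n : ℕ) (z u : Fin n → ℂ) (p q : ℕ)
    (hp : 1 ≤ p) (hq : 1 ≤ q) :
    I1op n (fpq n z u p q)
        = C (8 : ℂ) *
            (C (∑ j : Fin n, z j * (starRingEnd ℂ) (u j)) * fpq n z u (p - 1) q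
              + C ((starRingEnd ℂ) (∑ j : Fin n, z j * (starRingEnd ℂ) (u j))) *
                  fpq n z u p (q - 1)) ∧
    I2op n (fpq n z u p q)
        = C ((64 : ℂ) *
              ((∑ j : Fin n, z j * (starRingEnd ℂ) (u j)) *
                  (starRingEnd ℂ) (∑ j : Fin n, z j * (starRingEnd ℂ) (u j))
                - (∑ j : Fin n, z j * (starRingEnd ℂ) (z j)) *
                  (∑ j : Fin n, u j * (starRingEnd ℂ) (u j)))) *
            fpq n z u (p - 1) (q - 1) := by
  obtain ⟨p, rfl⟩ := Nat.exists_eq_add_of_le' hp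
  obtain ⟨q, rfl⟩ := Nat.exists_eq_add_of_le' hq
  simp only [Nat.add_sub_cancel, fpq_eq_aeval_planeWaveMonomial]
  refine ⟨?_, ?_⟩
  · rw [I1op_aeval_planeWaveForms, diffOp_C_mul_apply, map_add, LinearMap.add_apply,
      diffOp_C_mul_apply, diffOp_C_mul_apply, diffOp_X_zero_mul_X_three_planeWaveMonomial,
      diffOp_X_one_mul_X_two_planeWaveMonomial]
    simp only [smul_eq_C_mul, map_add, map_mul, aeval_C, algebraMap_eq, mul_add]
  · rw [I2op_aeval_planeWaveForms, diffOp_C_mul_apply,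
      diffOp_X_mul_X_mul_X_mul_X_planeWaveMonomial, map_smul, smul_eq_C_mul]

theorem statement17 (n : ℕ) (hn : 1 ≤ n) (z u : Fin n → ℂ) (p q : ℕ)
    (hp : 1 ≤ p) (hq : 1 ≤ q) :
    I1op n (fpq n z u p q)
        = C (8 : ℂ) *
            (C (∑ j : Fin n, z j * (starRingEnd ℂ) (u j)) * fpq n z u (p - 1) q
              + C ((starRingEnd ℂ) (∑ j : Fin n, z j * (starRingEnd ℂ) (u j))) *
                  fpq n z u p (q - 1)) ∧
    I2op n (fpq n z u p q)
        = C ((64 : ℂ) *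
              ((∑ j : Fin n, z j * (starRingEnd ℂ) (u j)) *
                  (starRingEnd ℂ) (∑ j : Fin n, z j * (starRingEnd ℂ) (u j))
                - (∑ j : Fin n, z j * (starRingEnd ℂ) (z j)) *
                  (∑ j : Fin n, u j * (starRingEnd ℂ) (u j)))) *
            fpq n z u (p - 1) (q - 1) :=
  statement17_general n z u p q hp hq

end
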